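/- arXiv:1008.1090 — 2 statements merged into one kernel-verified Lean document; each statement's English description precedes it below -/
import Mathlib

section
/- The multiplier algebra M(H) of a reproducing kernel Hilbert space H is reflexive: any bounded operator T on H leaving invariant every invariant subspace of M(H) is itself a multiplication operator. -/
/-
The orthocomplement of a kernel function `k_x` is invariant under every multiplication operator,
so `T` preserves it too. Splitting `h = a k_x + (h - a k_x)` with the second summand orthogonal
to `k_x` then gives `⟪k_x, T h⟫ = c(x) ⟪k_x, h⟫` with `c(x) = ⟪k_x, T k_x⟫ / ‖k_x‖²`, i.e. `k_x`
is an eigenvector of `T*` and `c` is a symbol for `T`.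
-/

open scoped ComplexInnerProductSpace

/-- `T` acts as the multiplication operator with symbol `f`. -/
def IsMultOp {X H : Type*} [NormedAddCommGroup H] [InnerProductSpace ℂ H]
    (k : X → H) (f : X → ℂ) (T : H →L[ℂ] H) : Prop :=
  ∀ (h : H) (x : X), ⟪k x, T h⟫ = f x * ⟪k x, h⟫

open scoped InnerProductSpace

section

variable {𝕜 E : Type*} [RCLike 𝕜] [NormedAddCommGroup E] [InnerProductSpace 𝕜 E]

theorem inner_map_eq_mul_inner_of_mapsTo_orthogonal {v : E} {T : E →ₗ[𝕜] E}
    (hT : ∀ y ∈ (𝕜 ∙ v)ᗮ, T y ∈ (𝕜 ∙ v)ᗮ) (h : E) :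
    ⟪v, T h⟫_𝕜 = ⟪v, T v⟫_𝕜 / ⟪v, v⟫_𝕜 * ⟪v, h⟫_𝕜 := by
  rcases eq_or_ne v 0 with rfl | hv
  · simp
  have hvv : ⟪v, v⟫_𝕜 ≠ 0 := inner_self_ne_zero.mpr hv
  set a : 𝕜 := ⟪v, h⟫_𝕜 / ⟪v, v⟫_𝕜
  have h_orth : h - a • v ∈ (𝕜 ∙ v)ᗮ := by
    rw [Submodule.mem_orthogonal_singleton_iff_inner_right, inner_sub_right,
      inner_smul_right, div_mul_cancel₀ _ hvv, sub_self]
  have h_image := Submodule.mem_orthogonal_singleton_iff_inner_right.mp (hT _ h_orth)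
  rw [map_sub, inner_sub_right, map_smul, inner_smul_right, sub_eq_zero] at h_image
  rw [h_image, div_mul_comm]

end

theorem IsMultOp.mapsTo_orthogonal_span_singleton {X H : Type*} [NormedAddCommGroup H]
    [InnerProductSpace ℂ H] {k : X → H} {f : X → ℂ} {M : H →L[ℂ] H} (hM : IsMultOp k f M)
    (x : X) : ∀ y ∈ (ℂ ∙ k x)ᗮ, M y ∈ (ℂ ∙ k x)ᗮ := by
  simp only [Submodule.mem_orthogonal_singleton_iff_inner_right]
  intro y hy
  rw [hM y x, hy, mul_zero]

theorem multiplier_algebra_reflexive_general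
    {X H : Type*} [NormedAddCommGroup H] [InnerProductSpace ℂ H]
    (k : X → H) (T : H →L[ℂ] H)
    (hT : ∀ L : Submodule ℂ H, IsClosed (L : Set H) →
      (∀ M : H →L[ℂ] H, (∃ f : X → ℂ, IsMultOp k f M) → ∀ x ∈ L, M x ∈ L) →
      ∀ x ∈ L, T x ∈ L) :
    ∃ f : X → ℂ, IsMultOp k f T :=
  ⟨fun x => ⟪k x, T (k x)⟫ / ⟪k x, k x⟫, fun h x =>
    inner_map_eq_mul_inner_of_mapsTo_orthogonal (T := (T : H →ₗ[ℂ] H))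
      (hT _ (Submodule.isClosed_orthogonal _)
        fun _ ⟨_, hM⟩ => hM.mapsTo_orthogonal_span_singleton x) h⟩

/-- The multiplier algebra `M(H)` of a reproducing kernel Hilbert space is reflexive:
any bounded operator `T` leaving invariant every closed subspace that is invariant for
all multiplication operators is itself a multiplication operator. -/
theorem multiplier_algebra_reflexive
    {X H : Type*} [NormedAddCommGroup H] [InnerProductSpace ℂ H] [CompleteSpace H]
    (k : X → H) (T : H →L[ℂ] H)
    (hT : ∀ L : Submodule ℂ H, IsClosed (L : Set H) →
      (∀ M : H →L[ℂ] H, (∃ f : X → ℂ, IsMultOp k f M) → ∀ x ∈ L, M x ∈ L) →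
      ∀ x ∈ L, T x ∈ L) :
    ∃ f : X → ℂ, IsMultOp k f T :=
  multiplier_algebra_reflexive_general k T hT
end

section
/- Let A be a unital weak-* closed algebra on H and J a WOT-closed ideal. Then the supremum of ‖P_{N_L} M_f P_{N_L}‖ over all invariant subspaces L equals the supremum over all cyclic invariant subspaces L = A[h], where N_L = L ⊖ closure(JL). -/
open scoped ComplexInnerProductSpace

/-- The weak operator topology on `B(H)`. -/
noncomputable def wotTopology (H : Type*) [NormedAddCommGroup H] [InnerProductSpace ℂ H] :
    TopologicalSpace (H →L[ℂ] H) :=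
  ⨆ p : H × H, TopologicalSpace.induced (fun T : H →L[ℂ] H => ⟪p.1, T p.2⟫) inferInstance

/-- `P` is the orthogonal projection of `H` onto the subspace `L`. -/
def IsProjOn {H : Type*} [NormedAddCommGroup H] [InnerProductSpace ℂ H]
    (L : Submodule ℂ H) (P : H →L[ℂ] H) : Prop :=
  ∀ x : H, P x ∈ L ∧ x - P x ∈ Lᗮ

/-- `closure(J L)`: the closed linear span of `{S u : S ∈ J, u ∈ L}`. -/
def idealRange {H : Type*} [NormedAddCommGroup H] [InnerProductSpace ℂ H]
    (J : Set (H →L[ℂ] H)) (L : Submodule ℂ H) : Submodule ℂ H :=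
  (Submodule.span ℂ {v | ∃ S ∈ J, ∃ u ∈ L, v = S u}).topologicalClosure

/-- Linear span of the orbit of `h` under a set of operators. -/
def orbit {H : Type*} [NormedAddCommGroup H] [InnerProductSpace ℂ H]
    (A : Set (H →L[ℂ] H)) (h : H) : Submodule ℂ H :=
  Submodule.span ℂ {v | ∃ T ∈ A, v = T h}

/-!
Let `L` be a closed invariant subspace with `N_L = L ⊖ M`, `M = closure(J L)`, and take
`h = P_{N_L} x`. The cyclic subspace `L' = A[h]` lies in `L`, so `M' = closure(J L') ≤ M`, and
`h ∈ N_{L'}`. For `w = T h ∈ L'` both `‖P_{N_L} w‖` and `‖P_{N_{L'}} w‖` are the distances from `w`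
to `M` and to `M'` respectively; the smaller subspace is farther away, so
`‖P_{N_L} T P_{N_L} x‖ ≤ ‖P_{N_{L'}} T P_{N_{L'}} h‖ ≤ ‖P_{N_{L'}} T P_{N_{L'}}‖ ‖x‖`.
-/

section

variable {H : Type*} [NormedAddCommGroup H] [InnerProductSpace ℂ H]

namespace IsProjOn

variable {N : Submodule ℂ H} {P : H →L[ℂ] H}

theorem apply_eq (hP : IsProjOn N P) {x y : H} (hy : y ∈ N) (hxy : x - y ∈ Nᗮ) : P x = y := by
  have hmem : P x - y ∈ N ⊓ Nᗮ := by
    refine ⟨sub_mem (hP x).1 hy, ?_⟩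
    rw [← sub_sub_sub_cancel_left y (P x) x]
    exact sub_mem hxy (hP x).2
  rw [N.inf_orthogonal_eq_bot, Submodule.mem_bot, sub_eq_zero] at hmem
  exact hmem

theorem apply_of_mem (hP : IsProjOn N P) {x : H} (hx : x ∈ N) : P x = x :=
  hP.apply_eq hx (by simp)

theorem norm_apply_le (hP : IsProjOn N P) (x : H) : ‖P x‖ ≤ ‖x‖ := by
  have hpyth := norm_add_sq_eq_norm_sq_add_norm_sq_of_inner_eq_zero (P x) (x - P x)
    (N.inner_right_of_mem_orthogonal (hP x).1 (hP x).2)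
  rw [add_sub_cancel] at hpyth
  nlinarith [norm_nonneg (P x), norm_nonneg x, sq_nonneg ‖x - P x‖]

theorem norm_le_one (hP : IsProjOn N P) : ‖P‖ ≤ 1 :=
  ContinuousLinearMap.opNorm_le_bound _ zero_le_one fun x => by simpa using hP.norm_apply_le x

theorem norm_mul_mul_le (hP : IsProjOn N P) (T : H →L[ℂ] H) : ‖P * T * P‖ ≤ ‖T‖ :=
  calc ‖P * T * P‖ ≤ ‖P‖ * ‖T‖ * ‖P‖ := norm_mul₃_le
    _ ≤ 1 * ‖T‖ * 1 := by gcongr <;> exact hP.norm_le_one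
    _ = ‖T‖ := by ring

theorem norm_apply_eq_infDist {L M : Submodule ℂ H} [M.HasOrthogonalProjection] (hML : M ≤ L)
    (hP : IsProjOn (L ⊓ Mᗮ) P) {w : H} (hw : w ∈ L) :
    ‖P w‖ = Metric.infDist w M := by
  have hMperp : M ≤ (L ⊓ Mᗮ)ᗮ :=
    M.le_orthogonal_orthogonal.trans (Submodule.orthogonal_le inf_le_right)
  have hPw : P w = w - M.starProjection w := by
    refine hP.apply_eq ⟨sub_mem hw (hML (M.starProjection_apply_mem w)),
      M.sub_starProjection_mem_orthogonal w⟩ ?_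
    rw [sub_sub_cancel]
    exact hMperp (M.starProjection_apply_mem w)
  rw [hPw, Submodule.starProjection_minimal, Metric.infDist_eq_iInf]
  simp only [dist_eq_norm]
  rfl

end IsProjOn

instance [CompleteSpace H] (J : Set (H →L[ℂ] H)) (L : Submodule ℂ H) :
    (idealRange J L).HasOrthogonalProjection := by
  unfold idealRange
  infer_instance

theorem exists_isProjOn_inf_orthogonal [CompleteSpace H] {L : Submodule ℂ H}
    (hL : IsClosed (L : Set H)) (M : Submodule ℂ H) : ∃ P : H →L[ℂ] H, IsProjOn (L ⊓ Mᗮ) P := by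
  have : CompleteSpace (L ⊓ Mᗮ : Submodule ℂ H) :=
    (hL.inter M.isClosed_orthogonal).completeSpace_coe
  exact ⟨_, fun x => ⟨(L ⊓ Mᗮ).starProjection_apply_mem x,
    (L ⊓ Mᗮ).sub_starProjection_mem_orthogonal x⟩⟩

theorem topologicalClosure_span_le {s : Set H} {L : Submodule ℂ H} (hL : IsClosed (L : Set H))
    (hs : s ⊆ L) : (Submodule.span ℂ s).topologicalClosure ≤ L :=
  Submodule.topologicalClosure_minimal _ (Submodule.span_le.2 hs) hL

def IsInvariantSubspace (A : Set (H →L[ℂ] H)) (L : Submodule ℂ H) : Prop :=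
  ∀ S ∈ A, ∀ x ∈ L, S x ∈ L

theorem IsInvariantSubspace.topologicalClosure {A : Set (H →L[ℂ] H)} {L : Submodule ℂ H}
    (hL : IsInvariantSubspace A L) : IsInvariantSubspace A L.topologicalClosure := fun S hS =>
  Set.MapsTo.closure (fun x hx => hL S hS x hx) S.continuous

theorem isInvariantSubspace_orbit (A : Subalgebra ℂ (H →L[ℂ] H)) (h : H) :
    IsInvariantSubspace A (orbit A h) := fun S hS _ hx => by
  have hle : orbit A h ≤ (orbit A h).comap (S : H →ₗ[ℂ] H) := Submodule.span_le.2 <| by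
    rintro _ ⟨R, hR, rfl⟩
    exact Submodule.subset_span ⟨S * R, mul_mem hS hR, rfl⟩
  exact hle hx

theorem mem_orbit_closure_self (A : Subalgebra ℂ (H →L[ℂ] H)) (h : H) :
    h ∈ (orbit A h).topologicalClosure :=
  Submodule.le_topologicalClosure _ (Submodule.subset_span ⟨1, one_mem A, rfl⟩)

theorem orbit_closure_le {A : Set (H →L[ℂ] H)} {L : Submodule ℂ H} (hLc : IsClosed (L : Set H))
    (hLinv : IsInvariantSubspace A L) {h : H} (hh : h ∈ L) : (orbit A h).topologicalClosure ≤ L :=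
  topologicalClosure_span_le hLc (by rintro _ ⟨R, hR, rfl⟩; exact hLinv R hR h hh)

theorem idealRange_le {A J : Set (H →L[ℂ] H)} (hJA : J ⊆ A) {L : Submodule ℂ H}
    (hLc : IsClosed (L : Set H)) (hLinv : IsInvariantSubspace A L) : idealRange J L ≤ L :=
  topologicalClosure_span_le hLc (by rintro _ ⟨S, hS, u, hu, rfl⟩; exact hLinv S (hJA hS) u hu)

theorem idealRange_mono (J : Set (H →L[ℂ] H)) {L L' : Submodule ℂ H} (hL : L' ≤ L) :
    idealRange J L' ≤ idealRange J L :=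
  topologicalClosure_span_le (Submodule.isClosed_topologicalClosure _) fun _ ⟨S, hS, u, hu, hv⟩ =>
    Submodule.le_topologicalClosure _ (Submodule.subset_span ⟨S, hS, u, hL hu, hv⟩)

theorem norm_compression_le_cyclic [CompleteSpace H] {A : Subalgebra ℂ (H →L[ℂ] H)}
    {J : Set (H →L[ℂ] H)} (hJA : J ⊆ A) {L : Submodule ℂ H} (hLc : IsClosed (L : Set H))
    (hLinv : IsInvariantSubspace A L) {P P' T : H →L[ℂ] H} (hT : T ∈ A) {h : H}
    (hh : h ∈ L ⊓ (idealRange J L)ᗮ) (hP : IsProjOn (L ⊓ (idealRange J L)ᗮ) P)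
    (hP' : IsProjOn ((orbit A h).topologicalClosure ⊓
      (idealRange J (orbit A h).topologicalClosure)ᗮ) P') :
    ‖P (T h)‖ ≤ ‖(P' * T * P') h‖ := by
  set L' := (orbit A h).topologicalClosure
  have hL'inv : IsInvariantSubspace A L' := (isInvariantSubspace_orbit A h).topologicalClosure
  have hL'L : L' ≤ L := orbit_closure_le hLc hLinv hh.1
  have hM'M : idealRange J L' ≤ idealRange J L := idealRange_mono J hL'L
  have hhL' : h ∈ L' := mem_orbit_closure_self A h
  have hP'h : P' h = h := hP'.apply_of_mem ⟨hhL', Submodule.orthogonal_le hM'M hh.2⟩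
  have hThL' : T h ∈ L' := hL'inv T hT h hhL'
  change ‖P (T h)‖ ≤ ‖P' (T (P' h))‖
  rw [hP'h,
    hP.norm_apply_eq_infDist (idealRange_le hJA hLc hLinv) (hL'L hThL'),
    hP'.norm_apply_eq_infDist (idealRange_le hJA (Submodule.isClosed_topologicalClosure _)
      hL'inv) hThL']
  exact Metric.infDist_le_infDist_of_subset hM'M ⟨0, zero_mem _⟩

end

theorem sup_compressions_eq_sup_over_cyclic_general
    {H : Type*} [NormedAddCommGroup H] [InnerProductSpace ℂ H] [CompleteSpace H]
    (A : Subalgebra ℂ (H →L[ℂ] H))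
    (J : Set (H →L[ℂ] H)) (hJA : J ⊆ A)
    (T : H →L[ℂ] H) (hT : T ∈ A) :
    sSup {r : ℝ | ∃ L : Submodule ℂ H, IsClosed (L : Set H) ∧
        (∀ S ∈ (A : Set (H →L[ℂ] H)), ∀ x ∈ L, S x ∈ L) ∧
        ∃ Pn : H →L[ℂ] H, IsProjOn (L ⊓ (idealRange J L)ᗮ) Pn ∧ r = ‖Pn * T * Pn‖} =
    sSup {r : ℝ | ∃ h : H, ∃ Pn : H →L[ℂ] H,
        IsProjOn ((orbit (A : Set (H →L[ℂ] H)) h).topologicalClosure ⊓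
          (idealRange J ((orbit (A : Set (H →L[ℂ] H)) h).topologicalClosure))ᗮ) Pn ∧
        r = ‖Pn * T * Pn‖} := by
  set cyclicNorms := {r : ℝ | ∃ h : H, ∃ Pn : H →L[ℂ] H,
    IsProjOn ((orbit (A : Set (H →L[ℂ] H)) h).topologicalClosure ⊓
      (idealRange J ((orbit (A : Set (H →L[ℂ] H)) h).topologicalClosure))ᗮ) Pn ∧
    r = ‖Pn * T * Pn‖}
  have exists_cyclic_proj (h : H) := exists_isProjOn_inf_orthogonal
    (Submodule.isClosed_topologicalClosure (orbit (A : Set (H →L[ℂ] H)) h))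
    (idealRange J (orbit (A : Set (H →L[ℂ] H)) h).topologicalClosure)
  have hbdd : BddAbove cyclicNorms :=
    ⟨‖T‖, by rintro _ ⟨h, P, hP, rfl⟩; exact hP.norm_mul_mul_le T⟩
  have hnonneg : 0 ≤ sSup cyclicNorms :=
    Real.sSup_nonneg (by rintro _ ⟨h, P, -, rfl⟩; exact norm_nonneg _)
  apply le_antisymm
  · refine Real.sSup_le ?_ hnonneg
    rintro _ ⟨L, hLc, hLinv, P, hP, rfl⟩
    refine ContinuousLinearMap.opNorm_le_bound _ hnonneg fun x => ?_
    obtain ⟨P', hP'⟩ := exists_cyclic_proj (P x)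
    calc ‖(P * T * P) x‖ ≤ ‖(P' * T * P') (P x)‖ :=
          norm_compression_le_cyclic hJA hLc hLinv hT (hP x).1 hP hP'
      _ ≤ ‖P' * T * P'‖ * ‖P x‖ := ContinuousLinearMap.le_opNorm _ _
      _ ≤ sSup cyclicNorms * ‖x‖ :=
          mul_le_mul (le_csSup hbdd ⟨P x, P', hP', rfl⟩) (hP.norm_apply_le x) (norm_nonneg _)
            hnonneg
  · obtain ⟨P₀, hP₀⟩ := exists_cyclic_proj 0
    refine csSup_le_csSup ⟨‖T‖, ?_⟩ ⟨_, 0, P₀, hP₀, rfl⟩ ?_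
    · rintro _ ⟨L, -, -, P, hP, rfl⟩
      exact hP.norm_mul_mul_le T
    · rintro _ ⟨h, P, hP, rfl⟩
      exact ⟨_, Submodule.isClosed_topologicalClosure _,
        (isInvariantSubspace_orbit A h).topologicalClosure, P, hP, rfl⟩

/-- The supremum of `‖P_{N_L} M_f P_{N_L}‖` over all invariant subspaces `L` equals the
supremum over all cyclic invariant subspaces `L = A[h]`, where `N_L = L ⊖ closure(JL)`. -/
theorem sup_compressions_eq_sup_over_cyclic
    {H : Type*} [NormedAddCommGroup H] [InnerProductSpace ℂ H] [CompleteSpace H]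
    (A : Subalgebra ℂ (H →L[ℂ] H))
    (hAws : @IsClosed _ (wotTopology H) (A : Set (H →L[ℂ] H)))
    (J : Set (H →L[ℂ] H)) (hJA : J ⊆ A) (hJ0 : (0 : H →L[ℂ] H) ∈ J)
    (hJideal : ∀ T ∈ (A : Set (H →L[ℂ] H)), ∀ S ∈ J, T * S ∈ J ∧ S * T ∈ J)
    (hJwot : @IsClosed _ (wotTopology H) J)
    (T : H →L[ℂ] H) (hT : T ∈ A) :
    sSup {r : ℝ | ∃ L : Submodule ℂ H, IsClosed (L : Set H) ∧
        (∀ S ∈ (A : Set (H →L[ℂ] H)), ∀ x ∈ L, S x ∈ L) ∧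
        ∃ Pn : H →L[ℂ] H, IsProjOn (L ⊓ (idealRange J L)ᗮ) Pn ∧ r = ‖Pn * T * Pn‖} =
    sSup {r : ℝ | ∃ h : H, ∃ Pn : H →L[ℂ] H,
        IsProjOn ((orbit (A : Set (H →L[ℂ] H)) h).topologicalClosure ⊓
          (idealRange J ((orbit (A : Set (H →L[ℂ] H)) h).topologicalClosure))ᗮ) Pn ∧
        r = ‖Pn * T * Pn‖} :=
  sup_compressions_eq_sup_over_cyclic_general A J hJA T hT
end
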